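/- arXiv:1411.3183 — 7 statements merged into one kernel-verified Lean document; each statement's English description precedes it below -/
import Mathlib

section
/- Let C be a monoidal category, X an object of C, and suppose the coendomorphism object E := cohom(X,X) exists, with coevaluation coev : X ⟶ X ⊗ E. Let Δ : E ⟶ E ⊗ E be the unique morphism with (id_X ⊗ Δ) ∘ coev = α_{X,E,E} ∘ (coev ⊗ id_E) ∘ coev, and let ε : E ⟶ 𝟙 be the unique morphism with (id_X ⊗ ε) ∘ coev equal to the inverse of the right unitor of X. Then (E, Δ, ε) is a comonoid in C, and X with coaction ρ := coev is a right comodule over (E, Δ, ε). -/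
/-!
Since `E` is a cohomomorphism object, a morphism out of `E` is determined by its composite with
`coev ≫ X ◁ -`. Under this transposition both sides of coassociativity become the triple
coevaluation `X ⟶ X ⊗ E ⊗ E ⊗ E` (by the defining equation of `Δ`, interchange and the pentagon),
and both sides of each counit law become a unitor (by the defining equation of `ε` and the
triangle). The comodule axioms for `X` are the defining equations of `Δ` and `ε` themselves.
-/

open CategoryTheory MonoidalCategory

section Coendomorphism

variable {C : Type*} [Category C] [MonoidalCategory C] {X E : C} {coev : X ⟶ X ⊗ E}

lemma eq_of_coev_comp_whiskerLeft_eq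
    (huniv : ∀ (W : C) (φ : X ⟶ X ⊗ W), ∃! f : E ⟶ W, coev ≫ (X ◁ f) = φ)
    {W : C} {f g : E ⟶ W} (h : coev ≫ X ◁ f = coev ≫ X ◁ g) : f = g :=
  (huniv W _).unique h rfl

variable {Δ : E ⟶ E ⊗ E} (hΔ : coev ≫ (X ◁ Δ) = coev ≫ (coev ▷ E) ≫ (α_ X E E).hom)
include hΔ

lemma coev_comp_whiskerLeft_comul_comp_comul_whiskerRight :
    coev ≫ X ◁ (Δ ≫ Δ ▷ E ≫ (α_ E E E).hom) =
      coev ≫ coev ▷ E ≫ (coev ▷ E) ▷ E ≫ (α_ (X ⊗ E) E E).hom ≫ (α_ X E (E ⊗ E)).hom := by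
  rw [whiskerLeft_comp, whiskerLeft_comp, reassoc_of% hΔ, ← associator_naturality_middle_assoc,
    ← comp_whiskerRight_assoc, hΔ]
  monoidal

lemma coev_comp_whiskerLeft_comul_comp_whiskerLeft_comul :
    coev ≫ X ◁ (Δ ≫ E ◁ Δ) =
      coev ≫ coev ▷ E ≫ (coev ▷ E) ▷ E ≫ (α_ (X ⊗ E) E E).hom ≫ (α_ X E (E ⊗ E)).hom := by
  rw [whiskerLeft_comp, reassoc_of% hΔ, ← associator_naturality_right, ← whisker_exchange_assoc,
    reassoc_of% hΔ]
  monoidal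

variable {ε : E ⟶ 𝟙_ C} (hε : coev ≫ (X ◁ ε) = (ρ_ X).inv)
include hε

lemma coev_comp_whiskerLeft_comul_comp_counit_whiskerRight :
    coev ≫ X ◁ (Δ ≫ ε ▷ E) = coev ≫ X ◁ (λ_ E).inv := by
  rw [whiskerLeft_comp, reassoc_of% hΔ, ← associator_naturality_middle,
    ← comp_whiskerRight_assoc, hε]
  monoidal

lemma coev_comp_whiskerLeft_comul_comp_whiskerLeft_counit :
    coev ≫ X ◁ (Δ ≫ E ◁ ε) = coev ≫ X ◁ (ρ_ E).inv := by
  rw [whiskerLeft_comp, reassoc_of% hΔ, ← associator_naturality_right, ← whisker_exchange_assoc,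
    reassoc_of% hε]
  monoidal

end Coendomorphism

/-- Let `E := cohom(X,X)` exist with coevaluation `coev : X ⟶ X ⊗ E`
(universal property `huniv`).  Let `Δ : E ⟶ E ⊗ E` be the (unique) morphism with
`(id_X ⊗ Δ) ∘ coev = α ∘ (coev ⊗ id_E) ∘ coev`, and `ε : E ⟶ 𝟙` the (unique) morphism
with `(id_X ⊗ ε) ∘ coev = (ρ_ X).inv`.  Then `(E, Δ, ε)` is a comonoid and `X` with
coaction `coev` is a right comodule over it. -/
theorem stmt2 {C : Type*} [Category C] [MonoidalCategory C] (X E : C)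
    (coev : X ⟶ X ⊗ E)
    (huniv : ∀ (W : C) (φ : X ⟶ X ⊗ W), ∃! f : E ⟶ W, coev ≫ (X ◁ f) = φ)
    (Δ : E ⟶ E ⊗ E)
    (hΔ : coev ≫ (X ◁ Δ) = coev ≫ (coev ▷ E) ≫ (α_ X E E).hom)
    (ε : E ⟶ 𝟙_ C)
    (hε : coev ≫ (X ◁ ε) = (ρ_ X).inv) :
    -- `(E, Δ, ε)` is a comonoid:
    (Δ ≫ (Δ ▷ E) ≫ (α_ E E E).hom = Δ ≫ (E ◁ Δ)) ∧
    (Δ ≫ (ε ▷ E) = (λ_ E).inv) ∧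
    (Δ ≫ (E ◁ ε) = (ρ_ E).inv) ∧
    -- `X` with coaction `ρ := coev` is a right comodule over `(E, Δ, ε)`:
    (coev ≫ (coev ▷ E) ≫ (α_ X E E).hom = coev ≫ (X ◁ Δ)) ∧
    (coev ≫ (X ◁ ε) = (ρ_ X).inv) := by
  refine ⟨eq_of_coev_comp_whiskerLeft_eq huniv ?_, eq_of_coev_comp_whiskerLeft_eq huniv ?_,
    eq_of_coev_comp_whiskerLeft_eq huniv ?_, hΔ.symm, hε⟩
  · rw [coev_comp_whiskerLeft_comul_comp_comul_whiskerRight hΔ,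
      coev_comp_whiskerLeft_comul_comp_whiskerLeft_comul hΔ]
  · exact coev_comp_whiskerLeft_comul_comp_counit_whiskerRight hΔ hε
  · exact coev_comp_whiskerLeft_comul_comp_whiskerLeft_counit hΔ hε
end

section
/- Let C be a monoidal category, (C₀, Δ_{C₀}, ε_{C₀}) a comonoid in C, and X an object such that E := cohom(X,X) exists, equipped with the comonoid structure (Δ_E, ε_E) determined by its universal property (Δ_E is the transpose of α ∘ (coev ⊗ id_E) ∘ coev and ε_E is the transpose of the inverse right unitor). If φ : X ⟶ X ⊗ C₀ is a right comodule coaction of C₀ on X, then the transpose φ̂ : E ⟶ C₀ of φ is a morphism of comonoids: Δ_{C₀} ∘ φ̂ = (φ̂ ⊗ φ̂) ∘ Δ_E and ε_{C₀} ∘ φ̂ = ε_E. -/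
/-!
Both identities are equalities of morphisms out of `E = cohom(X,X)`, so by the universal
property it suffices to compare their images under `coev ≫ (X ◁ -)`. For the counit this
image is `φ ≫ (X ◁ ε₀) = (ρ_ X).inv`, the defining property of `εE`. For the
comultiplication, naturality of the associator turns `coev ≫ (X ◁ (ΔE ≫ (φhat ⊗ φhat)))`
into `φ ≫ (φ ▷ C₀) ≫ α`, which coassociativity of the coaction identifies with the image
`φ ≫ (X ◁ Δ₀)` of `φhat ≫ Δ₀`.
-/

open CategoryTheory MonoidalCategory

namespace CategoryTheory.MonoidalCategory

variable {C : Type*} [Category C] [MonoidalCategory C]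

lemma eq_of_coev_whiskerLeft_eq {X E Z : C} {coev : X ⟶ X ⊗ E}
    (huniv : ∀ (W : C) (ψ : X ⟶ X ⊗ W), ∃! f : E ⟶ W, coev ≫ (X ◁ f) = ψ)
    {f g : E ⟶ Z} (h : coev ≫ (X ◁ f) = coev ≫ (X ◁ g)) : f = g :=
  (huniv Z _).unique h rfl

lemma comp_whiskerRight_associator_whiskerLeft_tensorHom {A B D E E' V W : C}
    (a : A ⟶ B ⊗ E) (b : B ⟶ D ⊗ E') (g : E' ⟶ V) (f : E ⟶ W) :
    a ≫ (b ▷ E) ≫ (α_ D E' E).hom ≫ (D ◁ (g ⊗ₘ f)) =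
      (a ≫ (B ◁ f)) ≫ ((b ≫ (D ◁ g)) ▷ W) ≫ (α_ D V W).hom := by
  simp only [tensorHom_def, whiskerLeft_comp, comp_whiskerRight, Category.assoc]
  rw [whisker_exchange_assoc, whisker_exchange_assoc, associator_naturality_right,
    associator_naturality_middle_assoc]

end CategoryTheory.MonoidalCategory

theorem stmt3_general {C : Type*} [Category C] [MonoidalCategory C]
    (C₀ : C) (Δ₀ : C₀ ⟶ C₀ ⊗ C₀) (ε₀ : C₀ ⟶ 𝟙_ C)
    (X E : C) (coev : X ⟶ X ⊗ E)
    (huniv : ∀ (W : C) (ψ : X ⟶ X ⊗ W), ∃! f : E ⟶ W, coev ≫ (X ◁ f) = ψ)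
    (ΔE : E ⟶ E ⊗ E)
    (hΔE : coev ≫ (X ◁ ΔE) = coev ≫ (coev ▷ E) ≫ (α_ X E E).hom)
    (εE : E ⟶ 𝟙_ C)
    (hεE : coev ≫ (X ◁ εE) = (ρ_ X).inv)
    (φ : X ⟶ X ⊗ C₀)
    (hφ_coassoc : φ ≫ (φ ▷ C₀) ≫ (α_ X C₀ C₀).hom = φ ≫ (X ◁ Δ₀))
    (hφ_counit : φ ≫ (X ◁ ε₀) = (ρ_ X).inv)
    (φhat : E ⟶ C₀)
    (hφhat : coev ≫ (X ◁ φhat) = φ) :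
    φhat ≫ Δ₀ = ΔE ≫ (φhat ⊗ₘ φhat) ∧ φhat ≫ ε₀ = εE := by
  constructor
  · refine eq_of_coev_whiskerLeft_eq huniv ?_
    rw [whiskerLeft_comp, reassoc_of% hφhat, ← hφ_coassoc, whiskerLeft_comp, reassoc_of% hΔE,
      comp_whiskerRight_associator_whiskerLeft_tensorHom, hφhat]
  · refine eq_of_coev_whiskerLeft_eq huniv ?_
    rw [whiskerLeft_comp, reassoc_of% hφhat, hφ_counit, hεE]

/-- Let `(C₀, Δ₀, ε₀)` be a comonoid in a monoidal category `C` and let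
`E := cohom(X,X)` exist with coevaluation `coev` (universal property `huniv`), equipped
with the comonoid structure `(ΔE, εE)` determined by its universal property (`hΔE`, `hεE`).
If `φ : X ⟶ X ⊗ C₀` is a right comodule coaction of `C₀` on `X`, then the transpose
`φhat : E ⟶ C₀` of `φ` is a morphism of comonoids. -/
theorem stmt3 {C : Type*} [Category C] [MonoidalCategory C]
    (C₀ : C) (Δ₀ : C₀ ⟶ C₀ ⊗ C₀) (ε₀ : C₀ ⟶ 𝟙_ C)
    (hΔ₀ : Δ₀ ≫ (Δ₀ ▷ C₀) ≫ (α_ C₀ C₀ C₀).hom = Δ₀ ≫ (C₀ ◁ Δ₀))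
    (hε₀l : Δ₀ ≫ (ε₀ ▷ C₀) = (λ_ C₀).inv)
    (hε₀r : Δ₀ ≫ (C₀ ◁ ε₀) = (ρ_ C₀).inv)
    (X E : C) (coev : X ⟶ X ⊗ E)
    (huniv : ∀ (W : C) (ψ : X ⟶ X ⊗ W), ∃! f : E ⟶ W, coev ≫ (X ◁ f) = ψ)
    (ΔE : E ⟶ E ⊗ E)
    (hΔE : coev ≫ (X ◁ ΔE) = coev ≫ (coev ▷ E) ≫ (α_ X E E).hom)
    (εE : E ⟶ 𝟙_ C)
    (hεE : coev ≫ (X ◁ εE) = (ρ_ X).inv)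
    (φ : X ⟶ X ⊗ C₀)
    (hφ_coassoc : φ ≫ (φ ▷ C₀) ≫ (α_ X C₀ C₀).hom = φ ≫ (X ◁ Δ₀))
    (hφ_counit : φ ≫ (X ◁ ε₀) = (ρ_ X).inv)
    (φhat : E ⟶ C₀)
    (hφhat : coev ≫ (X ◁ φhat) = φ) :
    φhat ≫ Δ₀ = ΔE ≫ (φhat ⊗ₘ φhat) ∧ φhat ≫ ε₀ = εE :=
  stmt3_general C₀ Δ₀ ε₀ X E coev huniv ΔE hΔE εE hεE φ hφ_coassoc hφ_counit φhat hφhat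
end

section
/- Let C be a monoidal category, D a category, and F : D ⥤ C a functor such that cohom(F X, F Y) exists for all objects X, Y of D. Fix an object M of C. Then the transposition μ ↦ μ′, where μ′_X : cohom(F X, F X) ⟶ M is the transpose of μ_X : F X ⟶ F X ⊗ M, defines a bijection between the set of natural transformations μ : F ⟶ F ⊗ M (families μ_X : F X ⟶ F X ⊗ M with (F f ⊗ id_M) ∘ μ_X = μ_Y ∘ F f for all f : X ⟶ Y) and the set of cowedges with vertex M over the bifunctor (X,Y) ↦ cohom(F X, F Y). -/
/-!
Transposition along `coev X X` is a bijection `(E X X ⟶ M) ≃ (F X ⟶ F X ⊗ M)` for every `X`.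
For `f : X ⟶ Y`, both sides of the naturality square of the transposed family are maps
`F X ⟶ F Y ⊗ M`; their transposes along `coev X Y` are the two sides of the cowedge condition
for `f`. So the componentwise bijection restricts to natural families and cowedges.
-/

open CategoryTheory MonoidalCategory

namespace CategoryTheory.MonoidalCategory

variable {C : Type*} [Category C] [MonoidalCategory C]

noncomputable def coevTranspose {A B E : C} (coev : A ⟶ B ⊗ E)
    (huniv : ∀ (W : C) (φ : A ⟶ B ⊗ W), ∃! g : E ⟶ W, coev ≫ (B ◁ g) = φ) (W : C) :
    (E ⟶ W) ≃ (A ⟶ B ⊗ W) :=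
  Equiv.ofBijective (fun g => coev ≫ (B ◁ g))
    ⟨fun _ g h => (huniv W (coev ≫ (B ◁ g))).unique h rfl, fun φ => (huniv W φ).exists⟩

@[simp]
theorem coevTranspose_apply {A B E : C} (coev : A ⟶ B ⊗ E)
    (huniv : ∀ (W : C) (φ : A ⟶ B ⊗ W), ∃! g : E ⟶ W, coev ≫ (B ◁ g) = φ) {W : C}
    (g : E ⟶ W) : coevTranspose coev huniv W g = coev ≫ (B ◁ g) :=
  rfl

theorem cov_comp_eq_con_comp_iff {A B Eab Ea Eb M : C} {coevAB : A ⟶ B ⊗ Eab}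
    (huniv : ∀ (W : C) (φ : A ⟶ B ⊗ W), ∃! g : Eab ⟶ W, coevAB ≫ (B ◁ g) = φ)
    {coevA : A ⟶ A ⊗ Ea} {coevB : B ⟶ B ⊗ Eb} {f : A ⟶ B}
    {cov : Eab ⟶ Eb} (hcov : coevAB ≫ (B ◁ cov) = f ≫ coevB)
    {con : Eab ⟶ Ea} (hcon : coevAB ≫ (B ◁ con) = coevA ≫ (f ▷ Ea))
    (νA : Ea ⟶ M) (νB : Eb ⟶ M) :
    cov ≫ νB = con ≫ νA ↔ (coevA ≫ (A ◁ νA)) ≫ (f ▷ M) = f ≫ coevB ≫ (B ◁ νB) := by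
  rw [← (coevTranspose coevAB huniv M).injective.eq_iff, eq_comm]
  simp only [coevTranspose_apply, whiskerLeft_comp, ← Category.assoc, hcov, hcon]
  simp only [Category.assoc, whisker_exchange]

end CategoryTheory.MonoidalCategory

/-- Let `F : D ⥤ C` be a functor into a monoidal category such that all
cohomomorphism objects `E X Y = cohom(F X, F Y)` exist (with coevaluations `coev` and
universal property `huniv`).  For `f : X ⟶ Y`, `cov f : E X Y ⟶ E Y Y` is the
covariantly induced map (transpose of `F f ≫ coev Y Y`) and `con f : E X Y ⟶ E X X` the
contravariantly induced map (transpose of `coev X X ≫ (F f ▷ E X X)`).  Then for a fixed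
object `M`, transposition gives a bijection between natural transformations
`F ⟶ F ⊗ M` and cowedges with vertex `M` over the bifunctor `(X,Y) ↦ cohom(F X, F Y)`. -/
theorem stmt6 {D : Type*} [Category D] {C : Type*} [Category C] [MonoidalCategory C]
    (F : D ⥤ C) (E : D → D → C)
    (coev : ∀ X Y : D, F.obj X ⟶ F.obj Y ⊗ E X Y)
    (huniv : ∀ (X Y : D) (W : C) (φ : F.obj X ⟶ F.obj Y ⊗ W),
      ∃! f : E X Y ⟶ W, coev X Y ≫ (F.obj Y ◁ f) = φ)
    (cov : ∀ {X Y : D}, (X ⟶ Y) → (E X Y ⟶ E Y Y))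
    (hcov : ∀ {X Y : D} (f : X ⟶ Y),
      coev X Y ≫ (F.obj Y ◁ cov f) = F.map f ≫ coev Y Y)
    (con : ∀ {X Y : D}, (X ⟶ Y) → (E X Y ⟶ E X X))
    (hcon : ∀ {X Y : D} (f : X ⟶ Y),
      coev X Y ≫ (F.obj Y ◁ con f) = coev X X ≫ (F.map f ▷ E X X))
    (M : C) :
    ∃ e : {μ : ∀ X : D, F.obj X ⟶ F.obj X ⊗ M //
            ∀ {X Y : D} (f : X ⟶ Y), μ X ≫ (F.map f ▷ M) = F.map f ≫ μ Y} ≃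
          {μ' : ∀ X : D, E X X ⟶ M //
            ∀ {X Y : D} (f : X ⟶ Y), cov f ≫ μ' Y = con f ≫ μ' X},
      ∀ (μ : {μ : ∀ X : D, F.obj X ⟶ F.obj X ⊗ M //
            ∀ {X Y : D} (f : X ⟶ Y), μ X ≫ (F.map f ▷ M) = F.map f ≫ μ Y}) (X : D),
        coev X X ≫ (F.obj X ◁ (e μ).1 X) = μ.1 X := by
  let transpose (X : D) := coevTranspose (coev X X) (huniv X X) M
  have cowedge_iff (ν : ∀ X, E X X ⟶ M) {X Y : D} (f : X ⟶ Y) :=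
    cov_comp_eq_con_comp_iff (huniv X Y) (hcov f) (hcon f) (ν X) (ν Y)
  refine ⟨(Equiv.subtypeEquiv (Equiv.piCongrRight transpose) fun ν => ?_).symm,
    fun μ X => (transpose X).apply_symm_apply (μ.1 X)⟩
  exact ⟨fun h _ _ f => (cowedge_iff ν f).1 (h f), fun h _ _ f => (cowedge_iff ν f).2 (h f)⟩
end

section
/- Let C be a monoidal category, D a category, F : D ⥤ C a functor such that cohom(F X, F Y) exists for all X, Y in D, and suppose an initial cowedge (c, ι) over the bifunctor (X,Y) ↦ cohom(F X, F Y) exists (the coend of F). Define δ_X := (id_{F X} ⊗ ι_X) ∘ coev_{F X, F X} : F X ⟶ F X ⊗ c. Then for every object M of C, the map Hom_C(c, M) → Nat(F, F ⊗ M) sending ψ to the family X ↦ (id_{F X} ⊗ ψ) ∘ δ_X is a bijection; equivalently, every natural transformation φ : F ⟶ F ⊗ M factors as φ_X = (id_{F X} ⊗ ψ) ∘ δ_X for a unique ψ : c ⟶ M. -/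
/-!
Transposition along `coev X X` identifies families `F X ⟶ F X ⊗ M` with families
`cohom(F X, F X) ⟶ M`, and under this correspondence naturality of the former is exactly the
cowedge condition on the latter: both sides of either condition are transposes of the same map
`F X ⟶ F Y ⊗ M` along `coev X Y`. Hence `Nat(F, F ⊗ M)` is in bijection with cowedges of
vertex `M`, and by initiality of `(c, ι)` with `Hom(c, M)`.
-/

open CategoryTheory MonoidalCategory

namespace CohomCoend

variable {D : Type*} [Category D] {C : Type*} [Category C] {E : D → D → C}
  (cov : ∀ {X Y : D}, (X ⟶ Y) → (E X Y ⟶ E Y Y))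
  (con : ∀ {X Y : D}, (X ⟶ Y) → (E X Y ⟶ E X X))

def IsCowedge {M : C} (μ : ∀ X : D, E X X ⟶ M) : Prop :=
  ∀ {X Y : D} (f : X ⟶ Y), cov f ≫ μ Y = con f ≫ μ X

variable {cov con}

lemma IsCowedge.comp {M N : C} {μ : ∀ X : D, E X X ⟶ M} (hμ : IsCowedge cov con μ)
    (ψ : M ⟶ N) : IsCowedge cov con fun X => μ X ≫ ψ := fun f => by
  rw [← Category.assoc, hμ f, Category.assoc]

variable [MonoidalCategory C] {F : D ⥤ C} {coev : ∀ X Y : D, F.obj X ⟶ F.obj Y ⊗ E X Y}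

lemma coev_whiskerLeft_cov
    (hcov : ∀ {X Y : D} (f : X ⟶ Y), coev X Y ≫ (F.obj Y ◁ cov f) = F.map f ≫ coev Y Y)
    {M : C} {X Y : D} (f : X ⟶ Y) (μ : E Y Y ⟶ M) :
    coev X Y ≫ (F.obj Y ◁ (cov f ≫ μ)) = F.map f ≫ coev Y Y ≫ (F.obj Y ◁ μ) := by
  rw [whiskerLeft_comp, ← Category.assoc, hcov, Category.assoc]

lemma coev_whiskerLeft_con
    (hcon : ∀ {X Y : D} (f : X ⟶ Y),
      coev X Y ≫ (F.obj Y ◁ con f) = coev X X ≫ (F.map f ▷ E X X))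
    {M : C} {X Y : D} (f : X ⟶ Y) (μ : E X X ⟶ M) :
    coev X Y ≫ (F.obj Y ◁ (con f ≫ μ)) = (coev X X ≫ (F.obj X ◁ μ)) ≫ (F.map f ▷ M) := by
  rw [whiskerLeft_comp, ← Category.assoc, hcon, Category.assoc, Category.assoc,
    whisker_exchange]

variable (hcov : ∀ {X Y : D} (f : X ⟶ Y), coev X Y ≫ (F.obj Y ◁ cov f) = F.map f ≫ coev Y Y)
    (hcon : ∀ {X Y : D} (f : X ⟶ Y),
      coev X Y ≫ (F.obj Y ◁ con f) = coev X X ≫ (F.map f ▷ E X X))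
include hcov hcon

lemma natural_of_isCowedge {M : C} {μ : ∀ X : D, E X X ⟶ M} (hμ : IsCowedge cov con μ)
    {X Y : D} (f : X ⟶ Y) :
    (coev X X ≫ (F.obj X ◁ μ X)) ≫ (F.map f ▷ M) = F.map f ≫ coev Y Y ≫ (F.obj Y ◁ μ Y) := by
  rw [← coev_whiskerLeft_con hcon, ← hμ f, coev_whiskerLeft_cov hcov]

lemma isCowedge_of_natural
    (hcancel : ∀ (X Y : D) (W : C) (g h : E X Y ⟶ W),
      coev X Y ≫ (F.obj Y ◁ g) = coev X Y ≫ (F.obj Y ◁ h) → g = h)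
    {M : C} {μ : ∀ X : D, E X X ⟶ M}
    (hμ : ∀ {X Y : D} (f : X ⟶ Y),
      (coev X X ≫ (F.obj X ◁ μ X)) ≫ (F.map f ▷ M) = F.map f ≫ coev Y Y ≫ (F.obj Y ◁ μ Y)) :
    IsCowedge cov con μ := fun f =>
  hcancel _ _ _ _ _ <| by rw [coev_whiskerLeft_cov hcov, coev_whiskerLeft_con hcon, hμ]

end CohomCoend

open CohomCoend in
/-- Setup as in Statement 6: `F : D ⥤ C`, cohomomorphism objects
`E X Y = cohom(F X, F Y)` with coevaluations `coev` (universal property `huniv`) and the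
induced covariant (`cov`) and contravariant (`con`) maps.  Let `(c, ι)` be an initial
cowedge over `(X,Y) ↦ cohom(F X, F Y)` (the coend of `F`), and set
`δ X := coev X X ≫ (F.obj X ◁ ι X)`.  Then for every `M` the map
`Hom(c, M) → Nat(F, F ⊗ M)`, `ψ ↦ (X ↦ δ X ≫ (F.obj X ◁ ψ))`, is a bijection:
its values are natural transformations, and every natural transformation
`φ : F ⟶ F ⊗ M` factors as `φ X = δ X ≫ (F.obj X ◁ ψ)` for a unique `ψ : c ⟶ M`. -/
theorem stmt7 {D : Type*} [Category D] {C : Type*} [Category C] [MonoidalCategory C]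
    (F : D ⥤ C) (E : D → D → C)
    (coev : ∀ X Y : D, F.obj X ⟶ F.obj Y ⊗ E X Y)
    (huniv : ∀ (X Y : D) (W : C) (φ : F.obj X ⟶ F.obj Y ⊗ W),
      ∃! f : E X Y ⟶ W, coev X Y ≫ (F.obj Y ◁ f) = φ)
    (cov : ∀ {X Y : D}, (X ⟶ Y) → (E X Y ⟶ E Y Y))
    (hcov : ∀ {X Y : D} (f : X ⟶ Y),
      coev X Y ≫ (F.obj Y ◁ cov f) = F.map f ≫ coev Y Y)
    (con : ∀ {X Y : D}, (X ⟶ Y) → (E X Y ⟶ E X X))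
    (hcon : ∀ {X Y : D} (f : X ⟶ Y),
      coev X Y ≫ (F.obj Y ◁ con f) = coev X X ≫ (F.map f ▷ E X X))
    (c : C) (ι : ∀ X : D, E X X ⟶ c)
    (hι : ∀ {X Y : D} (f : X ⟶ Y), cov f ≫ ι Y = con f ≫ ι X)
    (hinit : ∀ (M : C) (μ' : ∀ X : D, E X X ⟶ M),
      (∀ {X Y : D} (f : X ⟶ Y), cov f ≫ μ' Y = con f ≫ μ' X) →
      ∃! ψ : c ⟶ M, ∀ X : D, ι X ≫ ψ = μ' X) :
    -- for every `ψ : c ⟶ M` the induced family is a natural transformation `F ⟶ F ⊗ M`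
    (∀ (M : C) (ψ : c ⟶ M) {X Y : D} (f : X ⟶ Y),
      ((coev X X ≫ (F.obj X ◁ ι X)) ≫ (F.obj X ◁ ψ)) ≫ (F.map f ▷ M) =
        F.map f ≫ ((coev Y Y ≫ (F.obj Y ◁ ι Y)) ≫ (F.obj Y ◁ ψ))) ∧
    -- and every natural transformation `φ : F ⟶ F ⊗ M` arises this way from a unique `ψ`
    (∀ (M : C) (φ : ∀ X : D, F.obj X ⟶ F.obj X ⊗ M),
      (∀ {X Y : D} (f : X ⟶ Y), φ X ≫ (F.map f ▷ M) = F.map f ≫ φ Y) →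
      ∃! ψ : c ⟶ M, ∀ X : D,
        (coev X X ≫ (F.obj X ◁ ι X)) ≫ (F.obj X ◁ ψ) = φ X) := by
  have hι' : IsCowedge cov con ι := hι
  refine ⟨fun M ψ X Y f => ?_, fun M φ hφ => ?_⟩
  · simpa only [Category.assoc, whiskerLeft_comp] using
      natural_of_isCowedge hcov hcon (hι'.comp ψ) f
  · choose μ hμ hμ_unique using fun X => huniv X X M (φ X)
    have hμ_cowedge : IsCowedge cov con μ :=
      isCowedge_of_natural hcov hcon (fun X Y W _ _ h => (huniv X Y W _).unique h rfl)
        fun f => by rw [hμ, hμ, hφ]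
    obtain ⟨ψ, hψ, hψ_unique⟩ := hinit M μ hμ_cowedge
    refine ⟨ψ, fun X => ?_, fun ψ' hψ' => hψ_unique ψ' fun X => hμ_unique X _ ?_⟩
    · rw [Category.assoc, ← whiskerLeft_comp, hψ, hμ]
    · simpa only [whiskerLeft_comp, Category.assoc] using hψ' X
end

section
/- Let C be a monoidal category, D a category, F : D ⥤ C a functor such that cohom(F X, F Y) exists for all X, Y in D, and let (c, ι) be an initial cowedge over the bifunctor (X,Y) ↦ cohom(F X, F Y). Then the family δ_X := (id_{F X} ⊗ ι_X) ∘ coev_{F X, F X} : F X ⟶ F X ⊗ c is a natural transformation: for every f : X ⟶ Y in D, (F f ⊗ id_c) ∘ δ_X = δ_Y ∘ F f. -/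
open CategoryTheory MonoidalCategory

/-! Both sides factor through `coev X Y`: by the defining properties of the induced maps they
become `coev X Y` followed by `F Y` whiskered with the two legs `con f ≫ ι X` and `cov f ≫ ι Y`
of the cowedge condition, which agree. -/

theorem stmt8_general {D : Type*} [Category D] {C : Type*} [Category C] [MonoidalCategory C]
    (F : D ⥤ C) (E : D → D → C)
    (coev : ∀ X Y : D, F.obj X ⟶ F.obj Y ⊗ E X Y)
    (cov : ∀ {X Y : D}, (X ⟶ Y) → (E X Y ⟶ E Y Y))
    (hcov : ∀ {X Y : D} (f : X ⟶ Y),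
      coev X Y ≫ (F.obj Y ◁ cov f) = F.map f ≫ coev Y Y)
    (con : ∀ {X Y : D}, (X ⟶ Y) → (E X Y ⟶ E X X))
    (hcon : ∀ {X Y : D} (f : X ⟶ Y),
      coev X Y ≫ (F.obj Y ◁ con f) = coev X X ≫ (F.map f ▷ E X X))
    (c : C) (ι : ∀ X : D, E X X ⟶ c)
    (hι : ∀ {X Y : D} (f : X ⟶ Y), cov f ≫ ι Y = con f ≫ ι X) :
    ∀ {X Y : D} (f : X ⟶ Y),
      (coev X X ≫ (F.obj X ◁ ι X)) ≫ (F.map f ▷ c) =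
        F.map f ≫ (coev Y Y ≫ (F.obj Y ◁ ι Y)) := by
  intro X Y f
  calc (coev X X ≫ (F.obj X ◁ ι X)) ≫ (F.map f ▷ c)
      = coev X X ≫ (F.map f ▷ E X X) ≫ (F.obj Y ◁ ι X) := by
        rw [Category.assoc, whisker_exchange]
    _ = coev X Y ≫ (F.obj Y ◁ (con f ≫ ι X)) := by
        rw [← Category.assoc, ← hcon, whiskerLeft_comp, Category.assoc]
    _ = coev X Y ≫ (F.obj Y ◁ (cov f ≫ ι Y)) := by rw [hι]
    _ = F.map f ≫ (coev Y Y ≫ (F.obj Y ◁ ι Y)) := by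
        rw [whiskerLeft_comp, ← Category.assoc, hcov, Category.assoc]

/-- Setup as in Statements 6–7: `F : D ⥤ C`, cohomomorphism objects
`E X Y = cohom(F X, F Y)` with coevaluations `coev` (universal property `huniv`), the
induced covariant (`cov`) and contravariant (`con`) maps, and `(c, ι)` an initial cowedge
over `(X,Y) ↦ cohom(F X, F Y)`.  Then the family `δ X := coev X X ≫ (F.obj X ◁ ι X)` is
a natural transformation: `(F f ⊗ id_c) ∘ δ X = δ Y ∘ F f` for every `f : X ⟶ Y`. -/
theorem stmt8 {D : Type*} [Category D] {C : Type*} [Category C] [MonoidalCategory C]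
    (F : D ⥤ C) (E : D → D → C)
    (coev : ∀ X Y : D, F.obj X ⟶ F.obj Y ⊗ E X Y)
    (huniv : ∀ (X Y : D) (W : C) (φ : F.obj X ⟶ F.obj Y ⊗ W),
      ∃! f : E X Y ⟶ W, coev X Y ≫ (F.obj Y ◁ f) = φ)
    (cov : ∀ {X Y : D}, (X ⟶ Y) → (E X Y ⟶ E Y Y))
    (hcov : ∀ {X Y : D} (f : X ⟶ Y),
      coev X Y ≫ (F.obj Y ◁ cov f) = F.map f ≫ coev Y Y)
    (con : ∀ {X Y : D}, (X ⟶ Y) → (E X Y ⟶ E X X))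
    (hcon : ∀ {X Y : D} (f : X ⟶ Y),
      coev X Y ≫ (F.obj Y ◁ con f) = coev X X ≫ (F.map f ▷ E X X))
    (c : C) (ι : ∀ X : D, E X X ⟶ c)
    (hι : ∀ {X Y : D} (f : X ⟶ Y), cov f ≫ ι Y = con f ≫ ι X)
    (hinit : ∀ (M : C) (μ' : ∀ X : D, E X X ⟶ M),
      (∀ {X Y : D} (f : X ⟶ Y), cov f ≫ μ' Y = con f ≫ μ' X) →
      ∃! ψ : c ⟶ M, ∀ X : D, ι X ≫ ψ = μ' X) :
    ∀ {X Y : D} (f : X ⟶ Y),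
      (coev X X ≫ (F.obj X ◁ ι X)) ≫ (F.map f ▷ c) =
        F.map f ≫ (coev Y Y ≫ (F.obj Y ◁ ι Y)) :=
  stmt8_general F E coev cov hcov con hcon c ι hι
end

section
/- Let C be a monoidal category, D a category, F : D ⥤ C a functor such that cohom(F X, F Y) exists for all X, Y in D, and let (c, ι) be an initial cowedge over the bifunctor (X,Y) ↦ cohom(F X, F Y). For each X let (Δ_X, ε_X) be the canonical comonoid structure on cohom(F X, F X) (Δ_X the transpose of α ∘ (coev ⊗ id) ∘ coev, ε_X the transpose of the inverse right unitor of F X). Then the family X ↦ (ι_X ⊗ ι_X) ∘ Δ_X is a cowedge with vertex c ⊗ c and the family X ↦ ε_X is a cowedge with vertex 𝟙; the induced morphisms Δ_c : c ⟶ c ⊗ c and ε_c : c ⟶ 𝟙 make (c, Δ_c, ε_c) a comonoid in C, and every ι_X : cohom(F X, F X) ⟶ c is a morphism of comonoids. -/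
/-!
Write `θ_μ := coev ≫ A ◁ μ` for the map whose transpose is `μ : cohom(A, B) ⟶ M`.
A family `μ X : cohom(F X, F X) ⟶ M` is a cowedge exactly when the maps `θ_(μ X)` are natural
in `X`: the two sides of the cowedge condition for `f : X ⟶ Y` are the transposes, along
`coev X Y`, of the two sides of the naturality square at `f`. Since `θ_(Δ ≫ (μ ⊗ ν))` is
`θ_ν ≫ θ_μ ▷ _ ≫ α`, `Δ ≫ (ι ⊗ ι)` is a cowedge because `ι` is; `ε` is one because `θ_ε = ρ⁻¹`.
The same formula reduces the comonoid laws of `cohom(A, A)` to coherence, and the laws descend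
to `c` because the `ι X` are jointly epimorphic and compatible with comultiplication and counit.
-/

open CategoryTheory MonoidalCategory

section
variable {C : Type*} [Category C] [MonoidalCategory C]

def IsCoevaluation {A B H : C} (coev : A ⟶ B ⊗ H) : Prop :=
  ∀ (W : C) (φ : A ⟶ B ⊗ W), ∃! f : H ⟶ W, coev ≫ B ◁ f = φ

theorem IsCoevaluation.hom_ext {A B H W : C} {coev : A ⟶ B ⊗ H} (hcoev : IsCoevaluation coev)
    {f g : H ⟶ W} (w : coev ≫ B ◁ f = coev ≫ B ◁ g) : f = g :=
  (hcoev W _).unique w rfl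

section CohomComonoid

variable {A H : C} {coev : A ⟶ A ⊗ H} {Δ : H ⟶ H ⊗ H}

theorem coev_whiskerLeft_comul_tensorHom
    (hΔ : coev ≫ A ◁ Δ = coev ≫ coev ▷ H ≫ (α_ A H H).hom) {M N : C} (μ : H ⟶ M) (ν : H ⟶ N) :
    coev ≫ A ◁ (Δ ≫ (μ ⊗ₘ ν)) =
      (coev ≫ A ◁ ν) ≫ (coev ≫ A ◁ μ) ▷ N ≫ (α_ A M N).hom := by
  rw [whiskerLeft_comp, reassoc_of% hΔ]
  simp only [Category.assoc, comp_whiskerRight]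
  rw [whisker_exchange_assoc, tensorHom_def']
  monoidal

abbrev cohomComonObj {ε : H ⟶ 𝟙_ C} (hcoev : IsCoevaluation coev)
    (hΔ : coev ≫ A ◁ Δ = coev ≫ coev ▷ H ≫ (α_ A H H).hom)
    (hε : coev ≫ A ◁ ε = (ρ_ A).inv) : ComonObj H where
  counit := ε
  comul := Δ
  counit_comul := hcoev.hom_ext <| by
    rw [← tensorHom_id ε, coev_whiskerLeft_comul_tensorHom hΔ, hε, whiskerLeft_id,
      Category.comp_id]
    monoidal
  comul_counit := hcoev.hom_ext <| by
    rw [← id_tensorHom H ε, coev_whiskerLeft_comul_tensorHom hΔ, hε, whiskerLeft_id,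
      Category.comp_id]
    monoidal
  comul_assoc := hcoev.hom_ext <| by
    have hl := coev_whiskerLeft_comul_tensorHom hΔ (𝟙 H) Δ
    have hr := coev_whiskerLeft_comul_tensorHom hΔ Δ (𝟙 H)
    rw [id_tensorHom, whiskerLeft_id, Category.comp_id] at hl
    rw [tensorHom_id, whiskerLeft_id, Category.comp_id, hΔ] at hr
    rw [hl, hΔ, ← Category.assoc Δ, whiskerLeft_comp, reassoc_of% hr]
    monoidal

end CohomComonoid

theorem IsCoevaluation.cov_comp_eq_con_comp_iff {A B H Hₐ Hᵦ M : C} (g : A ⟶ B)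
    {coev : A ⟶ B ⊗ H} (hcoev : IsCoevaluation coev) (coevₐ : A ⟶ A ⊗ Hₐ) (coevᵦ : B ⟶ B ⊗ Hᵦ)
    {cov : H ⟶ Hᵦ} {con : H ⟶ Hₐ} (hcov : coev ≫ B ◁ cov = g ≫ coevᵦ)
    (hcon : coev ≫ B ◁ con = coevₐ ≫ g ▷ Hₐ) (μₐ : Hₐ ⟶ M) (μᵦ : Hᵦ ⟶ M) :
    cov ≫ μᵦ = con ≫ μₐ ↔ g ≫ coevᵦ ≫ B ◁ μᵦ = (coevₐ ≫ A ◁ μₐ) ≫ g ▷ M := by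
  have hcov' : coev ≫ B ◁ (cov ≫ μᵦ) = g ≫ coevᵦ ≫ B ◁ μᵦ := by
    rw [whiskerLeft_comp, reassoc_of% hcov]
  have hcon' : coev ≫ B ◁ (con ≫ μₐ) = (coevₐ ≫ A ◁ μₐ) ≫ g ▷ M := by
    rw [whiskerLeft_comp, reassoc_of% hcon, ← whisker_exchange, Category.assoc]
  exact ⟨fun h => by rw [← hcov', h, hcon'], fun h => hcoev.hom_ext (by rw [hcov', hcon', h])⟩

theorem comp_whiskerRight_associator_natural {A B M N : C} (g : A ⟶ B)
    {θₐ : A ⟶ A ⊗ M} {θᵦ : B ⟶ B ⊗ M} {θ'ₐ : A ⟶ A ⊗ N} {θ'ᵦ : B ⟶ B ⊗ N}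
    (hθ : g ≫ θᵦ = θₐ ≫ g ▷ M) (hθ' : g ≫ θ'ᵦ = θ'ₐ ≫ g ▷ N) :
    g ≫ θ'ᵦ ≫ θᵦ ▷ N ≫ (α_ B M N).hom = (θ'ₐ ≫ θₐ ▷ N ≫ (α_ A M N).hom) ≫ g ▷ (M ⊗ N) := by
  rw [reassoc_of% hθ', ← comp_whiskerRight_assoc, hθ, comp_whiskerRight_assoc,
    associator_naturality_left]
  simp only [Category.assoc]

section Descent

variable {H K : C} [ComonObj H] {h : H ⟶ K} {Δc : K ⟶ K ⊗ K} {εc : K ⟶ 𝟙_ C}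

theorem ComonObj.comp_counit_comul (hΔ : h ≫ Δc = ComonObj.comul ≫ (h ⊗ₘ h))
    (hε : h ≫ εc = ComonObj.counit) : h ≫ Δc ≫ εc ▷ K = h ≫ (λ_ K).inv := by
  rw [reassoc_of% hΔ, tensorHom_comp_whiskerRight, hε, ComonObj.counit_comul_hom]

theorem ComonObj.comp_comul_counit (hΔ : h ≫ Δc = ComonObj.comul ≫ (h ⊗ₘ h))
    (hε : h ≫ εc = ComonObj.counit) : h ≫ Δc ≫ K ◁ εc = h ≫ (ρ_ K).inv := by
  rw [reassoc_of% hΔ, tensorHom_comp_whiskerLeft, hε, ComonObj.comul_counit_hom]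

theorem ComonObj.comp_comul_assoc (hΔ : h ≫ Δc = ComonObj.comul ≫ (h ⊗ₘ h)) :
    h ≫ Δc ≫ Δc ▷ K ≫ (α_ K K K).hom = h ≫ Δc ≫ K ◁ Δc := by
  rw [reassoc_of% hΔ, reassoc_of% hΔ, tensorHom_comp_whiskerRight_assoc,
    tensorHom_comp_whiskerLeft, hΔ, ← whiskerRight_comp_tensorHom, ← whiskerLeft_comp_tensorHom,
    Category.assoc, associator_naturality, ComonObj.comul_assoc_assoc]

end Descent

end

/-- Setup as in Statements 6–8: `F : D ⥤ C`, cohomomorphism objects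
`E X Y = cohom(F X, F Y)` with coevaluations `coev` (universal property `huniv`), induced
maps `cov`, `con`, and `(c, ι)` an initial cowedge.  For each `X`, let `(Δ X, ε X)` be
the canonical comonoid structure on `E X X` (`Δ X` the transpose of
`α ∘ (coev ⊗ id) ∘ coev`, `ε X` the transpose of the inverse right unitor of `F X`).
Then `X ↦ Δ X ≫ (ι X ⊗ ι X)` is a cowedge with vertex `c ⊗ c`, `X ↦ ε X` is a cowedge
with vertex `𝟙`, the induced morphisms `Δc : c ⟶ c ⊗ c`, `εc : c ⟶ 𝟙` make `c` a
comonoid, and every `ι X` is a morphism of comonoids. -/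
theorem stmt9 {D : Type*} [Category D] {C : Type*} [Category C] [MonoidalCategory C]
    (F : D ⥤ C) (E : D → D → C)
    (coev : ∀ X Y : D, F.obj X ⟶ F.obj Y ⊗ E X Y)
    (huniv : ∀ (X Y : D) (W : C) (φ : F.obj X ⟶ F.obj Y ⊗ W),
      ∃! f : E X Y ⟶ W, coev X Y ≫ (F.obj Y ◁ f) = φ)
    (cov : ∀ {X Y : D}, (X ⟶ Y) → (E X Y ⟶ E Y Y))
    (hcov : ∀ {X Y : D} (f : X ⟶ Y),
      coev X Y ≫ (F.obj Y ◁ cov f) = F.map f ≫ coev Y Y)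
    (con : ∀ {X Y : D}, (X ⟶ Y) → (E X Y ⟶ E X X))
    (hcon : ∀ {X Y : D} (f : X ⟶ Y),
      coev X Y ≫ (F.obj Y ◁ con f) = coev X X ≫ (F.map f ▷ E X X))
    (c : C) (ι : ∀ X : D, E X X ⟶ c)
    (hι : ∀ {X Y : D} (f : X ⟶ Y), cov f ≫ ι Y = con f ≫ ι X)
    (hinit : ∀ (M : C) (μ' : ∀ X : D, E X X ⟶ M),
      (∀ {X Y : D} (f : X ⟶ Y), cov f ≫ μ' Y = con f ≫ μ' X) →
      ∃! ψ : c ⟶ M, ∀ X : D, ι X ≫ ψ = μ' X)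
    (Δ : ∀ X : D, E X X ⟶ E X X ⊗ E X X)
    (hΔ : ∀ X : D, coev X X ≫ (F.obj X ◁ Δ X) =
      coev X X ≫ (coev X X ▷ E X X) ≫ (α_ (F.obj X) (E X X) (E X X)).hom)
    (ε : ∀ X : D, E X X ⟶ 𝟙_ C)
    (hε : ∀ X : D, coev X X ≫ (F.obj X ◁ ε X) = (ρ_ (F.obj X)).inv) :
    -- `X ↦ Δ X ≫ (ι X ⊗ ι X)` is a cowedge with vertex `c ⊗ c`:
    (∀ {X Y : D} (f : X ⟶ Y),
      cov f ≫ (Δ Y ≫ (ι Y ⊗ₘ ι Y)) = con f ≫ (Δ X ≫ (ι X ⊗ₘ ι X))) ∧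
    -- `X ↦ ε X` is a cowedge with vertex `𝟙_ C`:
    (∀ {X Y : D} (f : X ⟶ Y), cov f ≫ ε Y = con f ≫ ε X) ∧
    -- the induced morphisms make `c` a comonoid and every `ι X` a comonoid morphism:
    (∃ (Δc : c ⟶ c ⊗ c) (εc : c ⟶ 𝟙_ C),
      (∀ X : D, ι X ≫ Δc = Δ X ≫ (ι X ⊗ₘ ι X)) ∧
      (∀ X : D, ι X ≫ εc = ε X) ∧
      (Δc ≫ (Δc ▷ c) ≫ (α_ c c c).hom = Δc ≫ (c ◁ Δc)) ∧
      (Δc ≫ (εc ▷ c) = (λ_ c).inv) ∧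
      (Δc ≫ (c ◁ εc) = (ρ_ c).inv)) := by
  let (X : D) : ComonObj (E X X) := cohomComonObj (huniv X X) (hΔ X) (hε X)
  have cowedge_iff {X Y : D} (f : X ⟶ Y) {M : C} (μ : ∀ X : D, E X X ⟶ M) :=
    IsCoevaluation.cov_comp_eq_con_comp_iff (F.map f) (huniv X Y) (coev X X) (coev Y Y)
      (hcov f) (hcon f) (μ X) (μ Y)
  have hιnat {X Y : D} (f : X ⟶ Y) := (cowedge_iff f ι).mp (hι f)
  have hεw {X Y : D} (f : X ⟶ Y) : cov f ≫ ε Y = con f ≫ ε X :=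
    (cowedge_iff f ε).mpr (by rw [hε, hε, rightUnitor_inv_naturality])
  have hΔw {X Y : D} (f : X ⟶ Y) :
      cov f ≫ (Δ Y ≫ (ι Y ⊗ₘ ι Y)) = con f ≫ (Δ X ≫ (ι X ⊗ₘ ι X)) := by
    refine (cowedge_iff f fun X => Δ X ≫ (ι X ⊗ₘ ι X)).mpr ?_
    rw [coev_whiskerLeft_comul_tensorHom (hΔ Y), coev_whiskerLeft_comul_tensorHom (hΔ X)]
    exact comp_whiskerRight_associator_natural _ (hιnat f) (hιnat f)
  have hom_ext {M : C} {ψ₁ ψ₂ : c ⟶ M} (h : ∀ X, ι X ≫ ψ₁ = ι X ≫ ψ₂) : ψ₁ = ψ₂ :=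
    (hinit M _ fun f => by rw [reassoc_of% hι f]).unique h fun _ => rfl
  obtain ⟨Δc, hΔc, -⟩ := hinit (c ⊗ c) _ hΔw
  obtain ⟨εc, hεc, -⟩ := hinit (𝟙_ C) ε hεw
  exact ⟨hΔw, hεw, Δc, εc, hΔc, hεc,
    hom_ext fun X => ComonObj.comp_comul_assoc (hΔc X),
    hom_ext fun X => ComonObj.comp_counit_comul (hΔc X) (hεc X),
    hom_ext fun X => ComonObj.comp_comul_counit (hΔc X) (hεc X)⟩
end

section
/- Let C be a monoidal category, D a category, F : D ⥤ C a functor such that cohom(F X, F Y) exists for all X, Y in D, let (c, ι) be an initial cowedge over the bifunctor (X,Y) ↦ cohom(F X, F Y), and equip c with the comonoid structure (Δ_c, ε_c) induced from the canonical comonoid structures on the cohom(F X, F X). Then for every object X of D, the object F X with coaction δ_X := (id_{F X} ⊗ ι_X) ∘ coev_{F X, F X} is a right comodule over the comonoid (c, Δ_c, ε_c). -/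
open CategoryTheory MonoidalCategory

/-! The canonical comonoid structure on `cohom(F X, F X)` is exactly what makes `coev X X` a
right comodule structure on `F X`. A comodule pushed forward along a comonoid morphism is again
a comodule, and `ι X` is a comonoid morphism into `c`. -/

namespace CategoryTheory.MonoidalCategory

variable {C : Type*} [Category C] [MonoidalCategory C]

theorem coassoc_comp_whiskerLeft_of_comul_hom {A E M : C} (δ : A ⟶ A ⊗ E)
    (ΔE : E ⟶ E ⊗ E) (ΔM : M ⟶ M ⊗ M) (g : E ⟶ M)
    (hδ : δ ≫ A ◁ ΔE = δ ≫ δ ▷ E ≫ (α_ A E E).hom)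
    (hg : g ≫ ΔM = ΔE ≫ (g ⊗ₘ g)) :
    (δ ≫ A ◁ g) ≫ (δ ≫ A ◁ g) ▷ M ≫ (α_ A M M).hom = (δ ≫ A ◁ g) ≫ A ◁ ΔM :=
  calc (δ ≫ A ◁ g) ≫ (δ ≫ A ◁ g) ▷ M ≫ (α_ A M M).hom
      = δ ≫ δ ▷ E ≫ (α_ A E E).hom ≫ A ◁ (g ⊗ₘ g) := by
        rw [comp_whiskerRight]
        slice_lhs 2 3 => rw [whisker_exchange]
        slice_lhs 3 4 => rw [whisker_exchange]
        slice_lhs 4 5 => rw [associator_naturality_right]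
        slice_lhs 3 4 => rw [associator_naturality_middle]
        simp [tensorHom_def]
    _ = (δ ≫ A ◁ g) ≫ A ◁ ΔM := by
        rw [Category.assoc, ← whiskerLeft_comp, hg, whiskerLeft_comp]
        slice_rhs 1 2 => rw [hδ]
        simp

theorem counit_comp_whiskerLeft_of_counit_hom {A E M : C} (δ : A ⟶ A ⊗ E)
    (εE : E ⟶ 𝟙_ C) (εM : M ⟶ 𝟙_ C) (g : E ⟶ M)
    (hδ : δ ≫ A ◁ εE = (ρ_ A).inv) (hg : g ≫ εM = εE) :
    (δ ≫ A ◁ g) ≫ A ◁ εM = (ρ_ A).inv := by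
  rw [Category.assoc, ← whiskerLeft_comp, hg, hδ]

end CategoryTheory.MonoidalCategory

theorem stmt10_general {D : Type*} [Category D] {C : Type*} [Category C] [MonoidalCategory C]
    (F : D ⥤ C) (E : D → D → C)
    (coev : ∀ X Y : D, F.obj X ⟶ F.obj Y ⊗ E X Y)
    (c : C) (ι : ∀ X : D, E X X ⟶ c)
    (Δ : ∀ X : D, E X X ⟶ E X X ⊗ E X X)
    (hΔ : ∀ X : D, coev X X ≫ (F.obj X ◁ Δ X) =
      coev X X ≫ (coev X X ▷ E X X) ≫ (α_ (F.obj X) (E X X) (E X X)).hom)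
    (ε : ∀ X : D, E X X ⟶ 𝟙_ C)
    (hε : ∀ X : D, coev X X ≫ (F.obj X ◁ ε X) = (ρ_ (F.obj X)).inv)
    (Δc : c ⟶ c ⊗ c) (εc : c ⟶ 𝟙_ C)
    (hΔc : ∀ X : D, ι X ≫ Δc = Δ X ≫ (ι X ⊗ₘ ι X))
    (hεc : ∀ X : D, ι X ≫ εc = ε X) :
    ∀ X : D,
      ((coev X X ≫ (F.obj X ◁ ι X)) ≫ ((coev X X ≫ (F.obj X ◁ ι X)) ▷ c) ≫
          (α_ (F.obj X) c c).hom =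
        (coev X X ≫ (F.obj X ◁ ι X)) ≫ (F.obj X ◁ Δc)) ∧
      ((coev X X ≫ (F.obj X ◁ ι X)) ≫ (F.obj X ◁ εc) = (ρ_ (F.obj X)).inv) := fun X =>
  ⟨coassoc_comp_whiskerLeft_of_comul_hom _ _ _ _ (hΔ X) (hΔc X),
    counit_comp_whiskerLeft_of_counit_hom _ _ _ _ (hε X) (hεc X)⟩

/-- Setup as in Statements 6–9: `F : D ⥤ C`, cohomomorphism objects
`E X Y = cohom(F X, F Y)` with coevaluations `coev` (universal property `huniv`), induced
maps `cov`, `con`, `(c, ι)` an initial cowedge, canonical comonoid structures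
`(Δ X, ε X)` on each `E X X`, and `(Δc, εc)` the induced comonoid structure on `c` (the
unique one making every `ι X` a comonoid morphism).  Then for every `X`, the object
`F.obj X` with coaction `δ X := coev X X ≫ (F.obj X ◁ ι X)` is a right comodule over
the comonoid `(c, Δc, εc)`. -/
theorem stmt10 {D : Type*} [Category D] {C : Type*} [Category C] [MonoidalCategory C]
    (F : D ⥤ C) (E : D → D → C)
    (coev : ∀ X Y : D, F.obj X ⟶ F.obj Y ⊗ E X Y)
    (huniv : ∀ (X Y : D) (W : C) (φ : F.obj X ⟶ F.obj Y ⊗ W),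
      ∃! f : E X Y ⟶ W, coev X Y ≫ (F.obj Y ◁ f) = φ)
    (cov : ∀ {X Y : D}, (X ⟶ Y) → (E X Y ⟶ E Y Y))
    (hcov : ∀ {X Y : D} (f : X ⟶ Y),
      coev X Y ≫ (F.obj Y ◁ cov f) = F.map f ≫ coev Y Y)
    (con : ∀ {X Y : D}, (X ⟶ Y) → (E X Y ⟶ E X X))
    (hcon : ∀ {X Y : D} (f : X ⟶ Y),
      coev X Y ≫ (F.obj Y ◁ con f) = coev X X ≫ (F.map f ▷ E X X))
    (c : C) (ι : ∀ X : D, E X X ⟶ c)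
    (hι : ∀ {X Y : D} (f : X ⟶ Y), cov f ≫ ι Y = con f ≫ ι X)
    (hinit : ∀ (M : C) (μ' : ∀ X : D, E X X ⟶ M),
      (∀ {X Y : D} (f : X ⟶ Y), cov f ≫ μ' Y = con f ≫ μ' X) →
      ∃! ψ : c ⟶ M, ∀ X : D, ι X ≫ ψ = μ' X)
    (Δ : ∀ X : D, E X X ⟶ E X X ⊗ E X X)
    (hΔ : ∀ X : D, coev X X ≫ (F.obj X ◁ Δ X) =
      coev X X ≫ (coev X X ▷ E X X) ≫ (α_ (F.obj X) (E X X) (E X X)).hom)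
    (ε : ∀ X : D, E X X ⟶ 𝟙_ C)
    (hε : ∀ X : D, coev X X ≫ (F.obj X ◁ ε X) = (ρ_ (F.obj X)).inv)
    (Δc : c ⟶ c ⊗ c) (εc : c ⟶ 𝟙_ C)
    (hΔc : ∀ X : D, ι X ≫ Δc = Δ X ≫ (ι X ⊗ₘ ι X))
    (hεc : ∀ X : D, ι X ≫ εc = ε X) :
    ∀ X : D,
      ((coev X X ≫ (F.obj X ◁ ι X)) ≫ ((coev X X ≫ (F.obj X ◁ ι X)) ▷ c) ≫
          (α_ (F.obj X) c c).hom =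
        (coev X X ≫ (F.obj X ◁ ι X)) ≫ (F.obj X ◁ Δc)) ∧
      ((coev X X ≫ (F.obj X ◁ ι X)) ≫ (F.obj X ◁ εc) = (ρ_ (F.obj X)).inv) :=
  stmt10_general F E coev c ι Δ hΔ ε hε Δc εc hΔc hεc
end
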